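/- Let 0 < ϱ₋ < ϱ₊, p₋, p₊ > 0, ϱ₁ > ϱ₊ and v₋ ∈ ℝ; set R := ϱ₋ − ϱ₊ < 0 and, for u > 0, v₊ := v₋ − u, A := ϱ₋v₋ − ϱ₊v₊, B := ϱ₋ϱ₊u² − (ϱ₊ − ϱ₋)(p₊ − p₋), μ₀ := A/R − (1/R)·√(B(ϱ₁−ϱ₊)/(ϱ₁−ϱ₋)), μ₁ := A/R − (1/R)·√(B(ϱ₁−ϱ₋)/(ϱ₁−ϱ₊)), and (whenever v₋ ≠ μ₀ and μ₁ ≠ v₊) Y := ϱ₁ϱ₊·(v₋+μ₀)/(v₋−μ₀) + ϱ₁ϱ₋·(μ₁+v₊)/(μ₁−v₊). Then there exists u₀ > 0 such that for all u ≥ u₀ the quantity Y is well defined and satisfies Y < 0 and Y + ϱ₁R < 0; moreover Y converges, as u → ∞, to ϱ₁R·(1 + 2/(√(ϱ₊(ϱ₁−ϱ₋)/(ϱ₋(ϱ₁−ϱ₊))) − 1)). -/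

import Mathlib

noncomputable section

/-- `B = ϱ₋ϱ₊u² − (ϱ₊ − ϱ₋)(p₊ − p₋)`. -/
def Bu (ϱm ϱp pm pp u : ℝ) : ℝ := ϱm * ϱp * u ^ 2 - (ϱp - ϱm) * (pp - pm)

/-- The left interface speed `μ₀ = A/R − (1/R)·√(B(ϱ₁−ϱ₊)/(ϱ₁−ϱ₋))`,
with `v₋` fixed and `v₊ = v₋ − u`. -/
def mu0u (ϱm ϱp pm pp ϱ1 vm u : ℝ) : ℝ :=
  (ϱm * vm - ϱp * (vm - u)) / (ϱm - ϱp) -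
    (1 / (ϱm - ϱp)) * Real.sqrt (Bu ϱm ϱp pm pp u * ((ϱ1 - ϱp) / (ϱ1 - ϱm)))

/-- The right interface speed `μ₁ = A/R − (1/R)·√(B(ϱ₁−ϱ₋)/(ϱ₁−ϱ₊))`,
with `v₋` fixed and `v₊ = v₋ − u`. -/
def mu1u (ϱm ϱp pm pp ϱ1 vm u : ℝ) : ℝ :=
  (ϱm * vm - ϱp * (vm - u)) / (ϱm - ϱp) -
    (1 / (ϱm - ϱp)) * Real.sqrt (Bu ϱm ϱp pm pp u * ((ϱ1 - ϱm) / (ϱ1 - ϱp)))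

/-- `Y = ϱ₁ϱ₊·(v₋+μ₀)/(v₋−μ₀) + ϱ₁ϱ₋·(μ₁+v₊)/(μ₁−v₊)`. -/
def Yu (ϱm ϱp pm pp ϱ1 vm u : ℝ) : ℝ :=
  ϱ1 * ϱp * ((vm + mu0u ϱm ϱp pm pp ϱ1 vm u) / (vm - mu0u ϱm ϱp pm pp ϱ1 vm u)) +
  ϱ1 * ϱm * ((mu1u ϱm ϱp pm pp ϱ1 vm u + (vm - u)) /
    (mu1u ϱm ϱp pm pp ϱ1 vm u - (vm - u)))

/-- `X = ϱ₊ϱ₋(p₋ − p₊) + (2c_v+1)ϱ₁(ϱ₋p₊ − ϱ₊p₋)`. -/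
def Xu (cv ϱm ϱp pm pp ϱ1 : ℝ) : ℝ :=
  ϱp * ϱm * (pm - pp) + (2 * cv + 1) * ϱ1 * (ϱm * pp - ϱp * pm)

/-- `Z = p₊ + ((ϱ₁−ϱ₊)ϱ₊/ϱ₁)(v₊ − μ₁)²`, with `v₊ = v₋ − u`. -/
def Zu (ϱm ϱp pm pp ϱ1 vm u : ℝ) : ℝ :=
  pp + ((ϱ1 - ϱp) * ϱp / ϱ1) * ((vm - u) - mu1u ϱm ϱp pm pp ϱ1 vm u) ^ 2

/-- The middle pressure `p₁ = (YZ − X)/(Y + ϱ₁R)` with `R = ϱ₋ − ϱ₊`. -/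
def p1u (cv ϱm ϱp pm pp ϱ1 vm u : ℝ) : ℝ :=
  (Yu ϱm ϱp pm pp ϱ1 vm u * Zu ϱm ϱp pm pp ϱ1 vm u - Xu cv ϱm ϱp pm pp ϱ1) /
    (Yu ϱm ϱp pm pp ϱ1 vm u + ϱ1 * (ϱm - ϱp))

/-- The subsolution parameter `ε₁ = (ϱ₁RZ + X)/(ϱ₁(Y + ϱ₁R))` with `R = ϱ₋ − ϱ₊`. -/
def eps1u (cv ϱm ϱp pm pp ϱ1 vm u : ℝ) : ℝ :=
  (ϱ1 * (ϱm - ϱp) * Zu ϱm ϱp pm pp ϱ1 vm u + Xu cv ϱm ϱp pm pp ϱ1) /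
    (ϱ1 * (Yu ϱm ϱp pm pp ϱ1 vm u + ϱ1 * (ϱm - ϱp)))

/-- The second component `β = (ϱ₊v₊ + μ₁(ϱ₁−ϱ₊))/ϱ₁` of the middle velocity,
with `v₊ = v₋ − u`. -/
def betau (ϱm ϱp pm pp ϱ1 vm u : ℝ) : ℝ :=
  (ϱp * (vm - u) + mu1u ϱm ϱp pm pp ϱ1 vm u * (ϱ1 - ϱp)) / ϱ1

/-- The subsolution parameter `ε₂`. -/
def eps2u (cv ϱm ϱp pm pp ϱ1 vm u : ℝ) : ℝ :=
  (1 / (ϱ1 * ϱp)) *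
      ((ϱ1 - ϱp) * (p1u cv ϱm ϱp pm pp ϱ1 vm u + pp) +
        2 * cv * (ϱ1 * pp - ϱp * p1u cv ϱm ϱp pm pp ϱ1 vm u)) +
    eps1u cv ϱm ϱp pm pp ϱ1 vm u *
      (((vm - u) + betau ϱm ϱp pm pp ϱ1 vm u) /
          ((vm - u) - betau ϱm ϱp pm pp ϱ1 vm u) * ((ϱ1 - ϱp) / ϱp) - 1)

open Filter Topology

/-! Both interface speeds grow linearly in `u`: `μᵢ/u → (ϱ₊ − √(ϱ₋ϱ₊aᵢ))/R`, where `aᵢ` is the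
density ratio under the square root. Each of the two fractions in `Y` is a quotient of two
linearly growing quantities, so it converges to the quotient of their slopes. With
`K = √(ϱ₊(ϱ₁−ϱ₋)/(ϱ₋(ϱ₁−ϱ₊)))` one has `√(ϱ₋ϱ₊a₁) = ϱ₋K`, and the limit of `Y` comes out as
`ϱ₁R(1 + 2/(K − 1))`. Since `K > 1` and `ϱ₁R < 0`, this limit lies below `ϱ₁R`, hence below
both `0` and `−ϱ₁R`. -/

section SlopeAtInfinity

variable {f g : ℝ → ℝ} {a b : ℝ}

theorem tendsto_sqrt_quadratic_div_atTop (α β : ℝ) :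
    Tendsto (fun u => √(α * u ^ 2 + β) / u) atTop (𝓝 √α) := by
  have hlim : Tendsto (fun u : ℝ => √(α + β / u ^ 2)) atTop (𝓝 √α) := by
    have h := tendsto_const_nhds (x := α).add
      (tendsto_const_nhds (x := β).div_atTop (tendsto_pow_atTop (two_ne_zero (α := ℕ))))
    rw [add_zero] at h
    exact (Real.continuous_sqrt.tendsto α).comp h
  refine hlim.congr' ?_
  filter_upwards [eventually_gt_atTop 0] with u hu
  have hsq : α * u ^ 2 + β = (α + β / u ^ 2) * u ^ 2 := by field_simp
  rw [hsq, Real.sqrt_mul' _ (sq_nonneg u), Real.sqrt_sq hu.le, mul_div_cancel_right₀ _ hu.ne']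

theorem tendsto_const_sub_div_atTop (c : ℝ) : Tendsto (fun u => (c - u) / u) atTop (𝓝 (-1)) := by
  have hlim := (tendsto_const_nhds (x := c).div_atTop tendsto_id).sub_const 1
  rw [zero_sub] at hlim
  refine hlim.congr' ?_
  filter_upwards [eventually_ne_atTop 0] with u hu
  rw [sub_div, id, div_self hu]

theorem eventually_sub_ne_zero_of_tendsto_div_atTop
    (hf : Tendsto (fun u => f u / u) atTop (𝓝 a)) (hg : Tendsto (fun u => g u / u) atTop (𝓝 b))
    (hab : a ≠ b) : ∀ᶠ u in atTop, f u - g u ≠ 0 := by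
  filter_upwards [(hf.sub hg).eventually_ne (sub_ne_zero.2 hab)] with u hu hfg
  rw [← sub_div, hfg, zero_div] at hu
  exact hu rfl

theorem tendsto_add_div_sub_of_tendsto_div_atTop
    (hf : Tendsto (fun u => f u / u) atTop (𝓝 a)) (hg : Tendsto (fun u => g u / u) atTop (𝓝 b))
    (hab : a ≠ b) :
    Tendsto (fun u => (f u + g u) / (f u - g u)) atTop (𝓝 ((a + b) / (a - b))) := by
  refine ((hf.add hg).div (hf.sub hg) (sub_ne_zero.2 hab)).congr' ?_
  filter_upwards [eventually_ne_atTop 0] with u hu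
  simp only [Pi.div_apply]
  rw [← add_div, ← sub_div, div_div_div_cancel_right₀ hu]

end SlopeAtInfinity

section DensityRatio

variable {ϱm ϱp ϱ1 : ℝ}

theorem sqrt_density_mul_eq (hϱm : 0 < ϱm) :
    √(ϱm * ϱp * ((ϱ1 - ϱm) / (ϱ1 - ϱp))) =
      ϱm * √(ϱp * (ϱ1 - ϱm) / (ϱm * (ϱ1 - ϱp))) := by
  rw [← Real.sqrt_sq hϱm.le, ← Real.sqrt_mul (sq_nonneg ϱm), Real.sqrt_sq hϱm.le]
  congr 1
  rw [mul_div_assoc', mul_div_assoc', sq, mul_assoc ϱm ϱm, mul_div_mul_left _ _ hϱm.ne',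
    mul_assoc]

theorem one_lt_sqrt_density_ratio (hϱm : 0 < ϱm) (hϱmp : ϱm < ϱp) (hϱ1 : ϱp < ϱ1) :
    1 < √(ϱp * (ϱ1 - ϱm) / (ϱm * (ϱ1 - ϱp))) := by
  have hϱ1m : 0 < ϱ1 * (ϱp - ϱm) := mul_pos (by linarith) (by linarith)
  rw [Real.lt_sqrt zero_le_one, one_pow, one_lt_div (mul_pos hϱm (by linarith))]
  linarith

theorem sqrt_density_mul_lt (hϱm : 0 < ϱm) (hϱmp : ϱm < ϱp) (hϱ1 : ϱp < ϱ1) :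
    √(ϱm * ϱp * ((ϱ1 - ϱp) / (ϱ1 - ϱm))) < ϱp := by
  rw [Real.sqrt_lt' (hϱm.trans hϱmp), mul_div_assoc', div_lt_iff₀ (by linarith)]
  have hϱ1m : 0 < ϱp * ϱ1 * (ϱp - ϱm) :=
    mul_pos (mul_pos (by linarith) (by linarith)) (by linarith)
  linarith

end DensityRatio

section InterfaceSpeeds

variable {ϱm ϱp ϱ1 : ℝ} (pm pp vm : ℝ)

theorem Bu_mul_eq (a u : ℝ) :
    Bu ϱm ϱp pm pp u * a = ϱm * ϱp * a * u ^ 2 + -((ϱp - ϱm) * (pp - pm) * a) := by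
  unfold Bu
  ring

theorem tendsto_speed_div_atTop (a : ℝ) :
    Tendsto (fun u => ((ϱm * vm - ϱp * (vm - u)) / (ϱm - ϱp) -
        (1 / (ϱm - ϱp)) * √(Bu ϱm ϱp pm pp u * a)) / u) atTop
      (𝓝 ((ϱp - √(ϱm * ϱp * a)) / (ϱm - ϱp))) := by
  have hlim : Tendsto (fun u => ((ϱm - ϱp) * vm / u + ϱp - √(Bu ϱm ϱp pm pp u * a) / u) /
      (ϱm - ϱp)) atTop (𝓝 ((0 + ϱp - √(ϱm * ϱp * a)) / (ϱm - ϱp))) := by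
    simp only [Bu_mul_eq]
    exact ((tendsto_const_nhds.div_atTop tendsto_id).add_const ϱp |>.sub
      (tendsto_sqrt_quadratic_div_atTop _ _)).div_const _
  rw [zero_add] at hlim
  refine hlim.congr' ?_
  filter_upwards [eventually_ne_atTop 0] with u hu
  field_simp
  ring

theorem tendsto_mu0u_div_atTop :
    Tendsto (fun u => mu0u ϱm ϱp pm pp ϱ1 vm u / u) atTop
      (𝓝 ((ϱp - √(ϱm * ϱp * ((ϱ1 - ϱp) / (ϱ1 - ϱm)))) / (ϱm - ϱp))) :=
  tendsto_speed_div_atTop pm pp vm _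

theorem tendsto_mu1u_div_atTop (hϱm : 0 < ϱm) :
    Tendsto (fun u => mu1u ϱm ϱp pm pp ϱ1 vm u / u) atTop
      (𝓝 ((ϱp - ϱm * √(ϱp * (ϱ1 - ϱm) / (ϱm * (ϱ1 - ϱp)))) / (ϱm - ϱp))) := by
  rw [← sqrt_density_mul_eq hϱm]
  exact tendsto_speed_div_atTop pm pp vm _

theorem mu0u_slope_neg (hϱm : 0 < ϱm) (hϱmp : ϱm < ϱp) (hϱ1 : ϱp < ϱ1) :
    (ϱp - √(ϱm * ϱp * ((ϱ1 - ϱp) / (ϱ1 - ϱm)))) / (ϱm - ϱp) < 0 :=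
  div_neg_of_pos_of_neg (sub_pos.2 (sqrt_density_mul_lt hϱm hϱmp hϱ1)) (sub_neg.2 hϱmp)

theorem mu1u_slope_add_one {K : ℝ} (hϱmp : ϱm ≠ ϱp) :
    (ϱp - ϱm * K) / (ϱm - ϱp) + 1 = ϱm * (K - 1) / (ϱp - ϱm) := by
  have hR : ϱm - ϱp ≠ 0 := sub_ne_zero.2 hϱmp
  have hR' : ϱp - ϱm ≠ 0 := sub_ne_zero.2 hϱmp.symm
  field_simp
  ring

theorem eventually_sub_mu0u_ne_zero (hϱm : 0 < ϱm) (hϱmp : ϱm < ϱp) (hϱ1 : ϱp < ϱ1) :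
    ∀ᶠ u in atTop, vm - mu0u ϱm ϱp pm pp ϱ1 vm u ≠ 0 :=
  eventually_sub_ne_zero_of_tendsto_div_atTop (tendsto_const_nhds.div_atTop tendsto_id)
    (tendsto_mu0u_div_atTop pm pp vm) (mu0u_slope_neg hϱm hϱmp hϱ1).ne'

theorem mu1u_slope_add_one_pos (hϱm : 0 < ϱm) (hϱmp : ϱm < ϱp) (hϱ1 : ϱp < ϱ1) :
    0 < (ϱp - ϱm * √(ϱp * (ϱ1 - ϱm) / (ϱm * (ϱ1 - ϱp)))) / (ϱm - ϱp) + 1 := by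
  rw [mu1u_slope_add_one hϱmp.ne]
  exact div_pos (mul_pos hϱm (sub_pos.2 (one_lt_sqrt_density_ratio hϱm hϱmp hϱ1)))
    (sub_pos.2 hϱmp)

theorem eventually_mu1u_sub_ne_zero (hϱm : 0 < ϱm) (hϱmp : ϱm < ϱp) (hϱ1 : ϱp < ϱ1) :
    ∀ᶠ u in atTop, mu1u ϱm ϱp pm pp ϱ1 vm u - (vm - u) ≠ 0 :=
  eventually_sub_ne_zero_of_tendsto_div_atTop (tendsto_mu1u_div_atTop pm pp vm hϱm)
    (tendsto_const_sub_div_atTop vm)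
    (neg_lt_iff_pos_add.2 (mu1u_slope_add_one_pos hϱm hϱmp hϱ1)).ne'

theorem tendsto_Yu_atTop (hϱm : 0 < ϱm) (hϱmp : ϱm < ϱp) (hϱ1 : ϱp < ϱ1) :
    Tendsto (fun u => Yu ϱm ϱp pm pp ϱ1 vm u) atTop
      (𝓝 (ϱ1 * (ϱm - ϱp) * (1 + 2 / (√(ϱp * (ϱ1 - ϱm) / (ϱm * (ϱ1 - ϱp))) - 1)))) := by
  set K := √(ϱp * (ϱ1 - ϱm) / (ϱm * (ϱ1 - ϱp)))
  set s0 := (ϱp - √(ϱm * ϱp * ((ϱ1 - ϱp) / (ϱ1 - ϱm)))) / (ϱm - ϱp)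
  set s1 := (ϱp - ϱm * K) / (ϱm - ϱp)
  have hs0 : s0 < 0 := mu0u_slope_neg hϱm hϱmp hϱ1
  have hs1 : s1 + 1 = ϱm * (K - 1) / (ϱp - ϱm) := mu1u_slope_add_one hϱmp.ne
  have hs1' : s1 - -1 ≠ 0 := by
    rw [sub_neg_eq_add]
    exact (mu1u_slope_add_one_pos hϱm hϱmp hϱ1).ne'
  have hlim : ϱ1 * ϱp * ((0 + s0) / (0 - s0)) + ϱ1 * ϱm * ((s1 + -1) / (s1 - -1)) =
      ϱ1 * (ϱm - ϱp) * (1 + 2 / (K - 1)) := by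
    rw [zero_add, zero_sub, div_neg, div_self hs0.ne, show s1 + -1 = (s1 - -1) - 2 by ring,
      sub_div, div_self hs1', sub_neg_eq_add, hs1]
    have : ϱp - ϱm ≠ 0 := (sub_pos.2 hϱmp).ne'
    have hK : K - 1 ≠ 0 := (sub_pos.2 (one_lt_sqrt_density_ratio hϱm hϱmp hϱ1)).ne'
    field_simp
    ring
  rw [← hlim]
  exact ((tendsto_add_div_sub_of_tendsto_div_atTop (tendsto_const_nhds.div_atTop tendsto_id)
      (tendsto_mu0u_div_atTop pm pp vm) hs0.ne').const_mul (ϱ1 * ϱp)).add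
    ((tendsto_add_div_sub_of_tendsto_div_atTop (tendsto_mu1u_div_atTop pm pp vm hϱm)
      (tendsto_const_sub_div_atTop vm) (sub_ne_zero.1 hs1')).const_mul (ϱ1 * ϱm))

end InterfaceSpeeds

theorem mul_one_add_two_div_lt_self {c K : ℝ} (hc : c < 0) (hK : 1 < K) :
    c * (1 + 2 / (K - 1)) < c := by
  have : 0 < 2 / (K - 1) := div_pos two_pos (sub_pos.2 hK)
  nlinarith

theorem Y_negative_large_u
    (ϱm ϱp pm pp ϱ1 vm : ℝ)
    (hϱm : 0 < ϱm) (hϱmp : ϱm < ϱp)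
    (hϱ1 : ϱp < ϱ1) :
    (∃ u0 : ℝ, 0 < u0 ∧ ∀ u : ℝ, u0 ≤ u →
      vm - mu0u ϱm ϱp pm pp ϱ1 vm u ≠ 0 ∧
      mu1u ϱm ϱp pm pp ϱ1 vm u - (vm - u) ≠ 0 ∧
      Yu ϱm ϱp pm pp ϱ1 vm u < 0 ∧
      Yu ϱm ϱp pm pp ϱ1 vm u + ϱ1 * (ϱm - ϱp) < 0) ∧
    Tendsto (fun u => Yu ϱm ϱp pm pp ϱ1 vm u) atTop
      (𝓝 (ϱ1 * (ϱm - ϱp) *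
        (1 + 2 / (Real.sqrt (ϱp * (ϱ1 - ϱm) / (ϱm * (ϱ1 - ϱp))) - 1)))) := by
  have hY := tendsto_Yu_atTop pm pp vm hϱm hϱmp hϱ1
  refine ⟨?_, hY⟩
  have hR : ϱ1 * (ϱm - ϱp) < 0 := mul_neg_of_pos_of_neg (by linarith) (sub_neg.2 hϱmp)
  have hlim := mul_one_add_two_div_lt_self hR (one_lt_sqrt_density_ratio hϱm hϱmp hϱ1)
  obtain ⟨N, hN⟩ := eventually_atTop.1 <|
    (eventually_sub_mu0u_ne_zero pm pp vm hϱm hϱmp hϱ1).and <|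
    (eventually_mu1u_sub_ne_zero pm pp vm hϱm hϱmp hϱ1).and <|
    hY.eventually (gt_mem_nhds hlim)
  refine ⟨max N 1, one_pos.trans_le (le_max_right N 1), fun u hu => ?_⟩
  obtain ⟨h0, h1, hYu⟩ := hN u ((le_max_left N 1).trans hu)
  exact ⟨h0, h1, by linarith, by linarith⟩
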